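/- The Zúñiga Laplacian 𝕃 is a bounded linear operator on L²(K_N), and every u ∈ L²(K_N) that vanishes μ-almost everywhere outside a single vertex ball B_I (for some I ∈ V) and has ∫_{K_N} u dμ = 0 is an eigenfunction of 𝕃 with eigenvalue −γ_I, i.e., 𝕃u = −γ_I u. (In particular all Kozyrev wavelets supported in K_N are eigenfunctions of 𝕃.) -/

import Mathlib

open MeasureTheory Set
open scoped ENNReal NNReal

noncomputable section

/-- The closed ball `{x : ℚ_p | |x - I|_p ≤ p^(-N)}`. -/
def pBall (p : ℕ) [Fact p.Prime] (N : ℤ) (I : ℚ_[p]) : Set ℚ_[p] :=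
  {x : ℚ_[p] | ‖x - I‖ ≤ (p : ℝ) ^ (-N)}

/-- The indicator function of the ball `pBall p N I`, as a `ℂ`-valued function. -/
def indic (p : ℕ) [Fact p.Prime] (N : ℤ) (I : ℚ_[p]) : ℚ_[p] → ℂ :=
  (pBall p N I).indicator 1

/-- `K_N`, the disjoint union of the balls around the vertices. -/
def KN (p : ℕ) [Fact p.Prime] (N : ℤ) (V : Finset ℚ_[p]) : Set ℚ_[p] :=
  ⋃ I ∈ V, pBall p N I

/-- The kernel `A(x,y) = p^N ∑_{I,J ∈ V} A_{IJ} 1_{B_I}(x) 1_{B_J}(y)`. -/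
def zker (p : ℕ) [Fact p.Prime] (N : ℤ) (V : Finset ℚ_[p]) (A : ℚ_[p] → ℚ_[p] → ℂ)
    (x y : ℚ_[p]) : ℂ :=
  (p : ℂ) ^ N * ∑ I ∈ V, ∑ J ∈ V, A I J * indic p N I x * indic p N J y

/-- The degree `γ_I = ∑_{J ∈ V} A_{IJ}`. -/
def deg (p : ℕ) [Fact p.Prime] (V : Finset ℚ_[p]) (A : ℚ_[p] → ℚ_[p] → ℂ) (I : ℚ_[p]) : ℂ :=
  ∑ J ∈ V, A I J

/-- The degree function `γ(x) = ∑_{I ∈ V} γ_I 1_{B_I}(x)`. -/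
def degFun (p : ℕ) [Fact p.Prime] (N : ℤ) (V : Finset ℚ_[p]) (A : ℚ_[p] → ℚ_[p] → ℂ)
    (x : ℚ_[p]) : ℂ :=
  ∑ I ∈ V, deg p V A I * indic p N I x

/-- The Zúñiga operator `𝒜u(x) = ∫_{K_N} A(x,y) u(y) dμ(y)`. -/
def zop (p : ℕ) [Fact p.Prime] (N : ℤ) (V : Finset ℚ_[p]) (A : ℚ_[p] → ℚ_[p] → ℂ)
    [MeasurableSpace ℚ_[p]] (μ : Measure ℚ_[p]) (u : ℚ_[p] → ℂ) (x : ℚ_[p]) : ℂ :=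
  ∫ y in KN p N V, zker p N V A x y * u y ∂μ

/-- The Zúñiga Laplacian `𝕃u = 𝒜u - γ·u`. -/
def lapOp (p : ℕ) [Fact p.Prime] (N : ℤ) (V : Finset ℚ_[p]) (A : ℚ_[p] → ℚ_[p] → ℂ)
    [MeasurableSpace ℚ_[p]] (μ : Measure ℚ_[p]) (u : ℚ_[p] → ℂ) (x : ℚ_[p]) : ℂ :=
  zop p N V A μ u x - degFun p N V A x * u x

open scoped Classical in
/-- The kernel `L(x,y) = p^N ∑_{I,J ∈ V} (A_{IJ} - γ_I δ_{IJ}) 1_{B_I}(x) 1_{B_J}(y)`. -/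
def lker (p : ℕ) [Fact p.Prime] (N : ℤ) (V : Finset ℚ_[p]) (A : ℚ_[p] → ℚ_[p] → ℂ)
    (x y : ℚ_[p]) : ℂ :=
  (p : ℂ) ^ N * ∑ I ∈ V, ∑ J ∈ V,
    (A I J - if I = J then deg p V A I else 0) * indic p N I x * indic p N J y

/-- The integral operator `ℒu(x) = ∫_{K_N} L(x,y) u(y) dμ(y)`. -/
def lop (p : ℕ) [Fact p.Prime] (N : ℤ) (V : Finset ℚ_[p]) (A : ℚ_[p] → ℚ_[p] → ℂ)
    [MeasurableSpace ℚ_[p]] (μ : Measure ℚ_[p]) (u : ℚ_[p] → ℂ) (x : ℚ_[p]) : ℂ :=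
  ∫ y in KN p N V, lker p N V A x y * u y ∂μ

/-- Pairwise disjointness of the vertex balls. -/
def BallsDisjoint (p : ℕ) [Fact p.Prime] (N : ℤ) (V : Finset ℚ_[p]) : Prop :=
  (V : Set ℚ_[p]).Pairwise fun I J => Disjoint (pBall p N I) (pBall p N J)

/-!
On `K_N` the kernel of `𝒜` is constant on each product `B_I × B_J`, so
`𝒜u = p^N ∑_{I,J} A_{IJ} (∫_{B_J} u) 1_{B_I}` has finite rank, while `γ` is a bounded step
function; hence `𝕃` is bounded on `L²(K_N)`. If `u` lives on `B_I` and has mean zero, then every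
`∫_{B_J} u` vanishes (for `J ≠ I` because the balls are disjoint), so `𝒜u = 0` and
`𝕃u = -γ u = -γ_I u`.
-/

section Balls

variable {p : ℕ} [Fact p.Prime] {N : ℤ} {V : Finset ℚ_[p]} {I J : ℚ_[p]}

theorem pBall_eq_closedBall (N : ℤ) (I : ℚ_[p]) :
    pBall p N I = Metric.closedBall I ((p : ℝ) ^ (-N)) := by
  ext x
  simp [pBall, dist_eq_norm]

theorem isCompact_KN : IsCompact (KN p N V) :=
  V.isCompact_biUnion fun I _ => pBall_eq_closedBall N I ▸ isCompact_closedBall I _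

theorem measurableSet_pBall [MeasurableSpace ℚ_[p]] [OpensMeasurableSpace ℚ_[p]]
    (N : ℤ) (I : ℚ_[p]) : MeasurableSet (pBall p N I) :=
  pBall_eq_closedBall N I ▸ measurableSet_closedBall

instance isFiniteMeasure_restrict_KN [MeasurableSpace ℚ_[p]] [OpensMeasurableSpace ℚ_[p]]
    (μ : Measure ℚ_[p]) [IsFiniteMeasureOnCompacts μ] :
    IsFiniteMeasure (μ.restrict (KN p N V)) :=
  isFiniteMeasure_restrict.mpr isCompact_KN.measure_lt_top.ne

theorem indic_mul_eq_indicator (u : ℚ_[p] → ℂ) (y : ℚ_[p]) :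
    indic p N J y * u y = (pBall p N J).indicator u y := by
  by_cases hy : y ∈ pBall p N J <;> simp [indic, hy]

theorem conj_indic (y : ℚ_[p]) : starRingEnd ℂ (indic p N J y) = indic p N J y := by
  by_cases hy : y ∈ pBall p N J <;> simp [indic, hy]

theorem indic_mul_self (x : ℚ_[p]) : indic p N I x * indic p N I x = indic p N I x := by
  by_cases hx : x ∈ pBall p N I <;> simp [indic, hx]

theorem indic_mul_indic_of_ne (hdisj : BallsDisjoint p N V) (hI : I ∈ V) (hJ : J ∈ V)
    (hJI : J ≠ I) (x : ℚ_[p]) : indic p N J x * indic p N I x = 0 := by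
  by_cases hx : x ∈ pBall p N J
  · simp [indic, Set.disjoint_left.mp (hdisj hJ hI hJI) hx]
  · simp [indic, hx]

theorem degFun_mul_indic (hdisj : BallsDisjoint p N V) (A : ℚ_[p] → ℚ_[p] → ℂ) (hI : I ∈ V)
    (x : ℚ_[p]) : degFun p N V A x * indic p N I x = deg p V A I * indic p N I x := by
  rw [degFun, Finset.sum_mul, Finset.sum_eq_single_of_mem I hI fun J hJ hJI => by
    rw [mul_assoc, indic_mul_indic_of_ne hdisj hI hJ hJI, mul_zero], mul_assoc, indic_mul_self]

end Balls

section Operators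

variable {p : ℕ} [Fact p.Prime] {N : ℤ} {V : Finset ℚ_[p]} {A : ℚ_[p] → ℚ_[p] → ℂ}
  [MeasurableSpace ℚ_[p]] {μ : Measure ℚ_[p]} {u : ℚ_[p] → ℂ}

theorem integrable_indic_mul [OpensMeasurableSpace ℚ_[p]] (hu : Integrable u μ) (J : ℚ_[p]) :
    Integrable (fun y => indic p N J y * u y) μ := by
  simp_rw [indic_mul_eq_indicator]
  exact hu.indicator (measurableSet_pBall N J)

theorem zop_eq_sum [OpensMeasurableSpace ℚ_[p]] (hu : Integrable u (μ.restrict (KN p N V)))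
    (x : ℚ_[p]) :
    zop p N V A μ u x = (p : ℂ) ^ N * ∑ I ∈ V, ∑ J ∈ V,
      A I J * indic p N I x * ∫ y in KN p N V, indic p N J y * u y ∂μ := by
  have hint := integrable_indic_mul (N := N) hu
  have hker : ∀ y, zker p N V A x y * u y = ∑ I ∈ V, ∑ J ∈ V,
      (p : ℂ) ^ N * (A I J * indic p N I x) * (indic p N J y * u y) := fun y => by
    simp only [zker, Finset.mul_sum, Finset.sum_mul]
    exact Finset.sum_congr rfl fun I _ => Finset.sum_congr rfl fun J _ => by ring
  rw [zop, integral_congr_ae (.of_forall hker), integral_finsetSum _ fun I _ =>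
    integrable_finsetSum _ fun J _ => (hint J).const_mul _]
  simp_rw [integral_finsetSum _ fun J _ => (hint J).const_mul _, integral_const_mul,
    Finset.mul_sum, mul_assoc]

variable {I : ℚ_[p]}

theorem indic_mul_ae_eq_self (hsupp : ∀ᵐ x ∂μ, x ∉ pBall p N I → u x = 0) :
    (fun x => indic p N I x * u x) =ᵐ[μ] u := by
  filter_upwards [hsupp] with x hx
  by_cases hxI : x ∈ pBall p N I
  · simp [indic, hxI]
  · simp [indic, hxI, hx hxI]

theorem integral_indic_mul_eq_zero (hdisj : BallsDisjoint p N V) (hI : I ∈ V) {J : ℚ_[p]}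
    (hJ : J ∈ V) (hsupp : ∀ᵐ x ∂μ, x ∉ pBall p N I → u x = 0)
    (hmean : ∫ x in KN p N V, u x ∂μ = 0) :
    ∫ y in KN p N V, indic p N J y * u y ∂μ = 0 := by
  obtain rfl | hJI := eq_or_ne J I
  · rwa [integral_congr_ae (ae_restrict_of_ae (indic_mul_ae_eq_self hsupp))]
  · have hvanish : (fun y => indic p N J y * u y) =ᵐ[μ] fun _ => 0 := by
      filter_upwards [indic_mul_ae_eq_self hsupp] with y hy
      rw [← hy, ← mul_assoc, indic_mul_indic_of_ne hdisj hI hJ hJI, zero_mul]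
    rw [integral_congr_ae (ae_restrict_of_ae hvanish), integral_zero]

theorem lapOp_ae_eq_neg_deg_mul [OpensMeasurableSpace ℚ_[p]] (hdisj : BallsDisjoint p N V)
    (hI : I ∈ V) (hu : Integrable u (μ.restrict (KN p N V)))
    (hsupp : ∀ᵐ x ∂μ, x ∉ pBall p N I → u x = 0)
    (hmean : ∫ x in KN p N V, u x ∂μ = 0) :
    lapOp p N V A μ u =ᵐ[μ.restrict (KN p N V)] fun x => -deg p V A I * u x := by
  filter_upwards [ae_restrict_of_ae (indic_mul_ae_eq_self hsupp)] with x hx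
  rw [lapOp, zop_eq_sum hu, Finset.sum_eq_zero fun I' _ => Finset.sum_eq_zero fun J hJ => by
    rw [integral_indic_mul_eq_zero hdisj hI hJ hsupp hmean, mul_zero], mul_zero, ← hx,
    ← mul_assoc, degFun_mul_indic hdisj A hI]
  ring

end Operators

section L2

variable (p : ℕ) [Fact p.Prime] (N : ℤ) (V : Finset ℚ_[p]) (A : ℚ_[p] → ℚ_[p] → ℂ)
  [MeasurableSpace ℚ_[p]] [OpensMeasurableSpace ℚ_[p]] (μ : Measure ℚ_[p])
  [IsFiniteMeasureOnCompacts μ]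

def indicL2 (J : ℚ_[p]) : Lp ℂ 2 (μ.restrict (KN p N V)) :=
  indicatorConstLp 2 (measurableSet_pBall N J) (measure_ne_top _ _) 1

theorem memLp_top_degFun : MemLp (degFun p N V A) ∞ (μ.restrict (KN p N V)) :=
  memLp_finsetSum V fun I _ => (memLp_indicator_const ∞ (measurableSet_pBall N I) (1 : ℂ)
    (Or.inr (measure_ne_top _ _))).const_mul (deg p V A I)

def lapOpL2 : Lp ℂ 2 (μ.restrict (KN p N V)) →L[ℂ] Lp ℂ 2 (μ.restrict (KN p N V)) :=
  ∑ I ∈ V, (∑ J ∈ V, ((p : ℂ) ^ N * A I J) • innerSL ℂ (indicL2 p N V μ J)).smulRight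
      (indicL2 p N V μ I) -
    (ContinuousLinearMap.mul ℂ ℂ).holderL (μ.restrict (KN p N V)) ∞ 2 2
      ((memLp_top_degFun p N V A μ).toLp _)

variable {p N V A μ}

theorem indicL2_ae_eq (J : ℚ_[p]) :
    ⇑(indicL2 p N V μ J) =ᵐ[μ.restrict (KN p N V)] indic p N J :=
  indicatorConstLp_coeFn

theorem inner_indicL2 (J : ℚ_[p]) (u : Lp ℂ 2 (μ.restrict (KN p N V))) :
    inner ℂ (indicL2 p N V μ J) u = ∫ y in KN p N V, indic p N J y * u y ∂μ := by
  rw [L2.inner_def]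
  refine integral_congr_ae ?_
  filter_upwards [indicL2_ae_eq J] with y hy
  rw [RCLike.inner_apply, hy, conj_indic, mul_comm]

theorem lapOpL2_apply_ae_eq (u : Lp ℂ 2 (μ.restrict (KN p N V))) :
    ⇑(lapOpL2 p N V A μ u) =ᵐ[μ.restrict (KN p N V)] lapOp p N V A μ ⇑u := by
  set c : ℚ_[p] → ℂ := fun I => ∑ J ∈ V, (p : ℂ) ^ N * A I J * inner ℂ (indicL2 p N V μ J) u
  set γ := (memLp_top_degFun p N V A μ).toLp _
  have hsum : lapOpL2 p N V A μ u = ∑ I ∈ V, c I • indicL2 p N V μ I -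
      (ContinuousLinearMap.mul ℂ ℂ).holder 2 γ u := by
    simp [lapOpL2, c, γ]
  have hu : Integrable (⇑u) (μ.restrict (KN p N V)) := (Lp.memLp u).integrable one_le_two
  rw [hsum]
  filter_upwards [Lp.coeFn_sub (∑ I ∈ V, c I • indicL2 p N V μ I) _,
    Lp.coeFn_fun_finsetSum V fun I => c I • indicL2 p N V μ I,
    (V.eventually_all).2 fun I _ => Lp.coeFn_smul (c I) (indicL2 p N V μ I),
    (V.eventually_all).2 fun I _ => indicL2_ae_eq (N := N) (V := V) (μ := μ) I,
    (ContinuousLinearMap.mul ℂ ℂ).coeFn_holder (r := 2) γ u,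
    MemLp.coeFn_toLp (memLp_top_degFun p N V A μ)]
    with x hsub hfin hsmul hind hmul hdeg
  rw [hsub, Pi.sub_apply, hfin, Finset.sum_congr rfl fun I hI => by
    rw [hsmul I hI, Pi.smul_apply, hind I hI, smul_eq_mul], hmul,
    ContinuousLinearMap.mul_apply', hdeg, lapOp, zop_eq_sum hu]
  congr 1
  simp only [c, inner_indicL2, Finset.mul_sum, Finset.sum_mul]
  exact Finset.sum_congr rfl fun I _ => Finset.sum_congr rfl fun J _ => by ring

end L2

theorem lapOp_bounded_and_eigenfunctions_general (p : ℕ) [Fact p.Prime]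
    [MeasurableSpace ℚ_[p]] [BorelSpace ℚ_[p]]
    (μ : Measure ℚ_[p]) [μ.IsAddHaarMeasure]
    (N : ℤ) (V : Finset ℚ_[p]) (hdisj : BallsDisjoint p N V)
    (A : ℚ_[p] → ℚ_[p] → ℂ) :
    (∃ T : Lp ℂ 2 (μ.restrict (KN p N V)) →L[ℂ] Lp ℂ 2 (μ.restrict (KN p N V)),
      ∀ u : Lp ℂ 2 (μ.restrict (KN p N V)),
        ⇑(T u) =ᵐ[μ.restrict (KN p N V)] lapOp p N V A μ ⇑u) ∧
    ∀ I ∈ V, ∀ u : ℚ_[p] → ℂ, MemLp u 2 (μ.restrict (KN p N V)) →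
      (∀ᵐ x ∂μ, x ∉ pBall p N I → u x = 0) →
      (∫ x in KN p N V, u x ∂μ) = 0 →
      lapOp p N V A μ u =ᵐ[μ.restrict (KN p N V)] fun x => -(deg p V A I) * u x :=
  ⟨⟨lapOpL2 p N V A μ, lapOpL2_apply_ae_eq⟩, fun _ hI _ hu hsupp hmean =>
    lapOp_ae_eq_neg_deg_mul hdisj hI (hu.integrable one_le_two) hsupp hmean⟩

/-- The Zúñiga Laplacian `𝕃` is a bounded linear operator on `L²(K_N)`,
and every `u ∈ L²(K_N)` vanishing `μ`-a.e. outside a single vertex ball `B_I` with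
`∫_{K_N} u dμ = 0` is an eigenfunction of `𝕃` with eigenvalue `-γ_I`. -/
theorem lapOp_bounded_and_eigenfunctions (p : ℕ) [Fact p.Prime]
    [MeasurableSpace ℚ_[p]] [BorelSpace ℚ_[p]]
    (μ : Measure ℚ_[p]) [μ.IsAddHaarMeasure]
    (hnorm : μ {x : ℚ_[p] | ‖x‖ ≤ 1} = 1)
    (N : ℤ) (V : Finset ℚ_[p]) (hdisj : BallsDisjoint p N V)
    (A : ℚ_[p] → ℚ_[p] → ℂ) :
    (∃ T : Lp ℂ 2 (μ.restrict (KN p N V)) →L[ℂ] Lp ℂ 2 (μ.restrict (KN p N V)),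
      ∀ u : Lp ℂ 2 (μ.restrict (KN p N V)),
        ⇑(T u) =ᵐ[μ.restrict (KN p N V)] lapOp p N V A μ ⇑u) ∧
    ∀ I ∈ V, ∀ u : ℚ_[p] → ℂ, MemLp u 2 (μ.restrict (KN p N V)) →
      (∀ᵐ x ∂μ, x ∉ pBall p N I → u x = 0) →
      (∫ x in KN p N V, u x ∂μ) = 0 →
      lapOp p N V A μ u =ᵐ[μ.restrict (KN p N V)] fun x => -(deg p V A I) * u x :=
  lapOp_bounded_and_eigenfunctions_general p μ N V hdisj A
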